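/- arXiv:2505.13274 — 2 statements merged into one kernel-verified Lean document; each statement's English description precedes it below -/
import Mathlib

section
/- Let {η_k} be a sequence of identically distributed real random variables with E[|η_1|^p] < ∞ for some p > 0. Let (ν_t)_{t≥0} be a family of nonnegative-integer-valued random variables, (a_t)_{t≥0} a positive family diverging to +∞, and θ > 0 a constant such that ν_t/a_t converges in probability to θ as t → ∞. Then max_{k=1,...,ν_t} η_k / a_t^{1/p} converges in probability to 0 as t → ∞. -/
/-!
Put `M_t = ε a_t^{1/p}`. Outside the event `ν_t > 2θ a_t`, whose probability vanishes, the maximum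
can exceed `M_t` only if one of `η_1, …, η_⌊2θ a_t⌋` does. By the union bound and identical
distribution this has probability at most `2θ a_t P(η_1 > M_t) = (2θ / ε^p) M_t^p P(η_1 > M_t)`,
which tends to `0` because `M^p P(η_1 > M) → 0` as `M → ∞` when `E|η_1|^p < ∞`.
-/

open MeasureTheory Filter Set Topology ProbabilityTheory
open scoped ENNReal

section Tail

variable {Ω : Type*} [MeasurableSpace Ω] {μ : Measure Ω}

theorem tendsto_mul_measure_lt_of_integrable {f : Ω → ℝ} (hf : Integrable f μ) :
    Tendsto (fun c : ℝ => ENNReal.ofReal c * μ {ω | c < f ω}) atTop (𝓝 0) := by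
  have hmarkov : ∀ c : ℝ, ENNReal.ofReal c * μ {ω | c < f ω} ≤
      ∫⁻ ω in {ω | c < f ω}, ENNReal.ofReal (f ω) ∂μ := fun c => by
    rw [← setLIntegral_const]
    exact setLIntegral_mono_ae hf.aemeasurable.restrict.ennreal_ofReal
      (ae_of_all _ fun ω hω => ENNReal.ofReal_le_ofReal (le_of_lt hω))
  have hfin : ∫⁻ ω, ENNReal.ofReal (f ω) ∂μ ≠ ∞ := hf.lintegral_lt_top.ne
  have hempty : (⋂ c : ℝ, {ω | c < f ω}) = ∅ :=
    eq_empty_of_forall_notMem fun ω hω => lt_irrefl (f ω) (mem_iInter.mp hω (f ω))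
  have htail : Tendsto (fun c : ℝ => μ {ω | c < f ω}) atTop (𝓝 0) := by
    have hone : μ {ω | 1 < f ω} ≠ ∞ := by
      refine ne_top_of_le_ne_top hfin (le_trans ?_ (setLIntegral_le_lintegral {ω | 1 < f ω} _))
      simpa using hmarkov 1
    have h := tendsto_measure_iInter_atTop (μ := μ) (s := fun c : ℝ => {ω | c < f ω})
      (fun _ => nullMeasurableSet_lt aemeasurable_const hf.aemeasurable)
      (fun _ _ hcd _ hω => lt_of_le_of_lt hcd hω) ⟨1, hone⟩
    rwa [hempty, measure_empty] at h
  exact tendsto_of_tendsto_of_tendsto_of_le_of_le tendsto_const_nhds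
    (tendsto_setLIntegral_zero hfin htail) (fun _ => zero_le) hmarkov

theorem tendsto_rpow_mul_measure_lt_of_integrable {X : Ω → ℝ} {p : ℝ} (hp : 0 < p)
    (hX : Integrable (fun ω => |X ω| ^ p) μ) :
    Tendsto (fun M : ℝ => ENNReal.ofReal (M ^ p) * μ {ω | M < X ω}) atTop (𝓝 0) := by
  refine tendsto_of_tendsto_of_tendsto_of_le_of_le' tendsto_const_nhds
    ((tendsto_mul_measure_lt_of_integrable hX).comp (tendsto_rpow_atTop hp))
    (Eventually.of_forall fun _ => zero_le) ?_
  filter_upwards [eventually_ge_atTop 0] with M hM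
  refine mul_le_mul_right (measure_mono fun ω hω => ?_) _
  exact Real.rpow_lt_rpow hM (lt_of_lt_of_le hω (le_abs_self _)) hp

end Tail

theorem abs_biSup_finset_le {ι : Type*} [Infinite ι] (s : Finset ι) (g : ι → ℝ) {M : ℝ}
    (hM : 0 ≤ M) (hg : ∀ k ∈ s, g k ≤ M) : |⨆ k ∈ s, g k| ≤ M := by
  have hle : ⨆ k ∈ s, g k ≤ M := Real.iSup_le (fun k => Real.iSup_le (hg k) hM) hM
  -- Outside `s` the inner supremum is `sSup ∅ = 0`, so the supremum is nonnegative.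
  have hnonneg : 0 ≤ ⨆ k ∈ s, g k := by
    obtain ⟨k, hk⟩ := Infinite.exists_notMem_finset s
    by_cases hbdd : BddAbove (range fun k => ⨆ _ : k ∈ s, g k)
    · refine le_trans ?_ (le_ciSup hbdd k)
      simp [hk]
    · rw [Real.iSup_of_not_bddAbove hbdd]
  exact abs_le.mpr ⟨by linarith, hle⟩

theorem measure_lt_abs_biSup_Icc_le {Ω : Type*} [MeasurableSpace Ω] (μ : Measure Ω)
    (η : ℕ → Ω → ℝ) (m : Ω → ℕ) (n : ℕ) {M : ℝ} (hM : 0 ≤ M) :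
    μ {ω | M < |⨆ k ∈ Finset.Icc 1 (m ω), η k ω|} ≤
      μ {ω | n < m ω} + ∑ k ∈ Finset.Icc 1 n, μ {ω | M < η k ω} := by
  refine le_trans (measure_mono ?_) (le_trans (measure_union_le _ _)
    (add_le_add le_rfl (measure_biUnion_finset_le _ _)))
  intro ω hω
  rcases lt_or_ge n (m ω) with hn | hn
  · exact Or.inl hn
  · obtain ⟨k, hk, hMk⟩ : ∃ k ∈ Finset.Icc 1 (m ω), M < η k ω := by
      by_contra! h
      exact (not_le.mpr hω) (abs_biSup_finset_le _ _ hM h)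
    obtain ⟨hk1, hkm⟩ := Finset.mem_Icc.mp hk
    exact Or.inr (mem_biUnion (Finset.mem_Icc.mpr ⟨hk1, hkm.trans hn⟩) hMk)

theorem measure_lt_abs_biSup_Icc_le_of_identDistrib {Ω : Type*} [MeasurableSpace Ω]
    (μ : Measure Ω) (η : ℕ → Ω → ℝ) (hmeas : ∀ k, Measurable (η k))
    (hident : ∀ k, 1 ≤ k → Measure.map (η k) μ = Measure.map (η 1) μ) (m : Ω → ℕ)
    {A θ M : ℝ} (hA : 0 < A) (hθ : 0 ≤ θ) (hM : 0 ≤ M) :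
    μ {ω | M < |⨆ k ∈ Finset.Icc 1 (m ω), η k ω|} ≤
      μ {ω | θ < |(m ω : ℝ) / A - θ|} + ENNReal.ofReal (2 * θ * A) * μ {ω | M < η 1 ω} := by
  set n := ⌊2 * θ * A⌋₊
  have hθA : 0 ≤ 2 * θ * A := by positivity
  have hlarge : {ω | n < m ω} ⊆ {ω | θ < |(m ω : ℝ) / A - θ|} := fun ω hω => by
    have h2 : 2 * θ * A < m ω := (Nat.floor_lt hθA).mp hω
    refine show θ < _ from lt_abs.mpr (Or.inl ?_)
    rw [lt_sub_iff_add_lt, lt_div_iff₀ hA]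
    linarith
  have hq : ∀ k ∈ Finset.Icc 1 n, μ {ω | M < η k ω} = μ {ω | M < η 1 ω} :=
    fun k hk => (IdentDistrib.mk (hmeas k).aemeasurable (hmeas 1).aemeasurable
      (hident k (Finset.mem_Icc.mp hk).1)).measure_mem_eq measurableSet_Ioi
  have hn : (n : ℝ≥0∞) ≤ ENNReal.ofReal (2 * θ * A) := by
    rw [← ENNReal.ofReal_natCast]
    exact ENNReal.ofReal_le_ofReal (Nat.floor_le hθA)
  calc _ ≤ μ {ω | n < m ω} + ∑ k ∈ Finset.Icc 1 n, μ {ω | M < η k ω} :=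
        measure_lt_abs_biSup_Icc_le μ η m n hM
    _ = μ {ω | n < m ω} + n * μ {ω | M < η 1 ω} := by
        rw [Finset.sum_congr rfl hq, Finset.sum_const, Nat.card_Icc, nsmul_eq_mul,
          Nat.add_sub_cancel]
    _ ≤ _ := add_le_add (measure_mono hlarge) (mul_le_mul_left hn _)

theorem stmt0_general {Ω : Type} [MeasurableSpace Ω] (P : Measure Ω)
    (η : ℕ → Ω → ℝ) (hmeas : ∀ k, Measurable (η k))
    (hident : ∀ k, 1 ≤ k → Measure.map (η k) P = Measure.map (η 1) P)
    (p : ℝ) (hp : 0 < p)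
    (hmom : Integrable (fun ω => |η 1 ω| ^ p) P)
    (ν : ℝ → Ω → ℕ)
    (a : ℝ → ℝ) (ha : ∀ t, 0 < a t) (hatop : Tendsto a atTop atTop)
    (θ : ℝ) (hθ : 0 < θ)
    (hconv : ∀ ε > (0:ℝ),
      Tendsto (fun t => P {ω | ε < |(ν t ω : ℝ) / a t - θ|}) atTop (𝓝 0)) :
    ∀ ε > (0:ℝ),
      Tendsto (fun t => P {ω | ε < |(⨆ k ∈ Finset.Icc 1 (ν t ω), η k ω) / a t ^ (1 / p)|})
        atTop (𝓝 0) := by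
  intro ε hε
  set M : ℝ → ℝ := fun t => ε * a t ^ (1 / p) with hM_def
  have hM : Tendsto M atTop atTop :=
    ((tendsto_rpow_atTop (one_div_pos.mpr hp)).comp hatop).const_mul_atTop hε
  have hbound : ∀ t, P {ω | ε < |(⨆ k ∈ Finset.Icc 1 (ν t ω), η k ω) / a t ^ (1 / p)|} ≤
      P {ω | θ < |(ν t ω : ℝ) / a t - θ|} +
        ENNReal.ofReal (2 * θ / ε ^ p) * (ENNReal.ofReal (M t ^ p) * P {ω | M t < η 1 ω}) := by
    intro t
    have hA : 0 < a t ^ (1 / p) := Real.rpow_pos_of_pos (ha t) _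
    have hMp : M t ^ p = ε ^ p * a t := by
      rw [Real.mul_rpow hε.le hA.le, one_div, Real.rpow_inv_rpow (ha t).le hp.ne']
    have hconst : 2 * θ / ε ^ p * (ε ^ p * a t) = 2 * θ * a t := by field_simp
    have hevent : {ω | ε < |(⨆ k ∈ Finset.Icc 1 (ν t ω), η k ω) / a t ^ (1 / p)|} =
        {ω | M t < |⨆ k ∈ Finset.Icc 1 (ν t ω), η k ω|} := Set.ext fun ω => by
      simp only [mem_ofPred_eq, abs_div, abs_of_pos hA, lt_div_iff₀ hA, hM_def]
    rw [hevent, ← mul_assoc, ← ENNReal.ofReal_mul (by positivity), hMp, hconst]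
    exact measure_lt_abs_biSup_Icc_le_of_identDistrib P η hmeas hident (ν t) (ha t) hθ.le
      (mul_pos hε hA).le
  have hupper := (hconv θ hθ).add
    (ENNReal.Tendsto.const_mul (a := ENNReal.ofReal (2 * θ / ε ^ p))
      ((tendsto_rpow_mul_measure_lt_of_integrable hp hmom).comp hM) (.inr ENNReal.ofReal_ne_top))
  rw [mul_zero, add_zero] at hupper
  exact tendsto_of_tendsto_of_tendsto_of_le_of_le tendsto_const_nhds hupper
    (fun _ => zero_le) hbound

/-- For identically distributed `η_k` with finite `p`-th absolute moment and
integer random indices `ν_t` with `ν_t / a_t → θ > 0` in probability (`a_t → ∞`),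
the maximum `max_{k=1,...,ν_t} η_k / a_t^{1/p}` tends to `0` in probability.
The maximum over an empty index set is `0` (convention of `sSup ∅ = 0` in `ℝ`). -/
theorem stmt0 {Ω : Type} [MeasurableSpace Ω] (P : Measure Ω) [IsProbabilityMeasure P]
    (η : ℕ → Ω → ℝ) (hmeas : ∀ k, Measurable (η k))
    (hident : ∀ k, 1 ≤ k → Measure.map (η k) P = Measure.map (η 1) P)
    (p : ℝ) (hp : 0 < p)
    (hmom : Integrable (fun ω => |η 1 ω| ^ p) P)
    (ν : ℝ → Ω → ℕ) (hν : ∀ t, Measurable (ν t))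
    (a : ℝ → ℝ) (ha : ∀ t, 0 < a t) (hatop : Tendsto a atTop atTop)
    (θ : ℝ) (hθ : 0 < θ)
    (hconv : ∀ ε > (0:ℝ),
      Tendsto (fun t => P {ω | ε < |(ν t ω : ℝ) / a t - θ|}) atTop (𝓝 0)) :
    ∀ ε > (0:ℝ),
      Tendsto (fun t => P {ω | ε < |(⨆ k ∈ Finset.Icc 1 (ν t ω), η k ω) / a t ^ (1 / p)|})
        atTop (𝓝 0) :=
  stmt0_general P η hmeas hident p hp hmom ν a ha hatop θ hθ hconv
end

section
/- Let (V̂, S) be a Markov renewal process on a finite state space 𝒱 with irreducible aperiodic embedded chain, with V̂_0 distributed according to the invariant measure π. Then for any measurable f : 𝒱 × [0,∞) → ℝ, the stationary sequence {f(V̂_{k−1}, S_k − S_{k−1})}_{k≥1} is φ-mixing with φ_n = K ρ^{n−1} for some constant K > 0 and ρ ∈ [0,1). -/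
open MeasureTheory ProbabilityTheory Filter Set Topology

/-- A time-homogeneous Markov renewal process `(V̂, S)` on a finite state space `𝒱`:
`Q v w t = P{V̂_{k+1} = w, S_{k+1} − S_k ≤ t | V̂_k = v}`, where the Markov renewal
property is expressed by conditioning on arbitrary events of the natural filtration
contained in `{V̂_k = v}`. -/
structure MarkovRenewal (Ω : Type) [MeasurableSpace Ω] (P : Measure Ω)
    (𝒱 : Type) [Fintype 𝒱] [DecidableEq 𝒱] [MeasurableSpace 𝒱]
    [MeasurableSingletonClass 𝒱] where
  V : ℕ → Ω → 𝒱
  S : ℕ → Ω → ℝ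
  Q : 𝒱 → 𝒱 → ℝ → ℝ
  measV : ∀ k, Measurable (V k)
  measS : ∀ k, Measurable (S k)
  S_zero : ∀ ω, S 0 ω = 0
  S_lt : ∀ ω k, S k ω < S (k + 1) ω
  markov : ∀ (k : ℕ) (v w : 𝒱) (t : ℝ) (A : Set Ω),
    MeasurableSet[MeasurableSpace.comap
      (fun ω => fun i : Fin (k + 1) => (V i ω, S i ω)) inferInstance] A →
    A ⊆ {ω | V k ω = v} →
    (P (A ∩ {ω | V (k + 1) ω = w ∧ S (k + 1) ω - S k ω ≤ t})).toReal
      = (P A).toReal * Q v w t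

section
variable {Ω : Type} [MeasurableSpace Ω] {P : Measure Ω}
  {𝒱 : Type} [Fintype 𝒱] [DecidableEq 𝒱] [MeasurableSpace 𝒱]
  [MeasurableSingletonClass 𝒱]

/-- Transition matrix of the embedded Markov chain: `p v w = lim_{t→∞} Q v w t`. -/
def MarkovRenewal.IsTransitionMatrix (M : MarkovRenewal Ω P 𝒱) (p : 𝒱 → 𝒱 → ℝ) : Prop :=
  ∀ v w, Tendsto (M.Q v w) atTop (𝓝 (p v w))

/-- Irreducibility of the embedded chain. -/
def Irred (p : 𝒱 → 𝒱 → ℝ) : Prop :=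
  ∀ v w, ∃ n, 0 < n ∧ 0 < ((Matrix.of p) ^ n) v w

/-- Irreducibility and aperiodicity of a finite chain (primitivity). -/
def Primitive (p : 𝒱 → 𝒱 → ℝ) : Prop :=
  ∃ N, ∀ n ≥ N, ∀ v w, 0 < ((Matrix.of p) ^ n) v w

/-- Invariant distribution of the embedded chain. -/
def IsInvariantDist (p : 𝒱 → 𝒱 → ℝ) (π : 𝒱 → ℝ) : Prop :=
  (∀ v, 0 < π v) ∧ (∑ v, π v = 1) ∧ (∀ w, ∑ v, π v * p v w = π w)

/-- Counting process associated to `S`. -/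
noncomputable def MarkovRenewal.N (M : MarkovRenewal Ω P 𝒱) (t : ℝ) (ω : Ω) : ℕ :=
  sSup {k : ℕ | M.S k ω ≤ t}

/-- First passage time of the embedded chain through `v0`. -/
noncomputable def MarkovRenewal.tau1 (M : MarkovRenewal Ω P 𝒱) (v0 : 𝒱) (ω : Ω) : ℕ :=
  sInf {k : ℕ | 1 ≤ k ∧ M.V k ω = v0}

end

/-!
Write `η_{j+1} = f(V̂_j, S_{j+1} - S_j)`. The Markov renewal property, stated for the events
`{V̂_{m+1} = w, S_{m+1} - S_m ≤ t}`, extends by π-λ arguments to the whole future: given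
`V̂_m = v`, the process `(V̂_{m+i}, S_{m+i+1} - S_{m+i})_{i ≥ 0}` is independent of the past and
has the conditional law `h_v` of the same process at time `0` given `V̂_0 = v`. For `A` in
`σ(η_1, …, η_k)` and `B` in the future after time `m = k + n - 1` this gives
`P(A ∩ B) - P(A) P(B) = ∑_{u,v} P(A, V̂_k = u) (p^{n-1}(u, v) - π_v) h_v(B)`,
and Doeblin's argument for the primitive matrix `p` bounds `|p^s(u, v) - π_v| ≤ c ρ^s`.
So `K = |𝒱| c` works.
-/

theorem exists_pow_div_le_geometric {γ : ℝ} (h0 : 0 < γ) (h1 : γ < 1) {N : ℕ} (hN : 0 < N) :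
    ∃ c > 0, ∃ ρ ∈ Ioo (0 : ℝ) 1, ∀ s : ℕ, γ ^ (s / N) ≤ c * ρ ^ s := by
  set ρ := γ ^ ((N : ℝ)⁻¹)
  have hρ0 : 0 < ρ := Real.rpow_pos_of_pos h0 _
  have hρ1 : ρ < 1 := Real.rpow_lt_one h0.le h1 (by positivity)
  have hρN : ρ ^ N = γ := Real.rpow_inv_natCast_pow h0.le hN.ne'
  refine ⟨γ⁻¹, inv_pos.2 h0, ρ, ⟨hρ0, hρ1⟩, fun s => ?_⟩
  have hle : ρ ^ (N * (s / N + 1)) ≤ ρ ^ s :=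
    pow_le_pow_of_le_one hρ0.le hρ1.le (Nat.lt_mul_div_succ s hN).le
  rw [pow_mul, hρN, pow_succ] at hle
  rw [le_inv_mul_iff₀ h0]
  linarith

namespace Matrix

variable {n : Type*} [Fintype n] [DecidableEq n]

theorem vecMul_pow_eq_self {P : Matrix n n ℝ} {π : n → ℝ} (hπ : π ᵥ* P = π) (s : ℕ) :
    π ᵥ* P ^ s = π := by
  induction s with
  | zero => simp
  | succ s ih => rw [pow_succ, ← vecMul_vecMul, ih, hπ]

/-- With `Π` the matrix whose rows are all `π`: `P^s - Π = (P^N - δΠ) (P^(s-N) - Π)`. -/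
theorem pow_apply_sub_eq_sum {P : Matrix n n ℝ} (hP : P ∈ rowStochastic ℝ n) {π : n → ℝ}
    (hπ1 : ∑ v, π v = 1) (hπ : π ᵥ* P = π) (δ : ℝ) {N s : ℕ} (hNs : N ≤ s) (u v : n) :
    (P ^ s) u v - π v = ∑ x, ((P ^ N) u x - δ * π x) * ((P ^ (s - N)) x v - π v) := by
  have hrow : ∑ x, (P ^ N) u x = 1 := sum_row_of_mem_rowStochastic (pow_mem hP N) u
  have hinv : ∑ x, π x * (P ^ (s - N)) x v = π v := congrFun (vecMul_pow_eq_self hπ _) v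
  have hmul : ∑ x, (P ^ N) u x * (P ^ (s - N)) x v = (P ^ s) u v := by
    rw [← mul_apply, ← pow_add, Nat.add_sub_cancel' hNs]
  simp only [sub_mul, mul_sub, Finset.sum_sub_distrib, ← Finset.sum_mul, mul_assoc,
    ← Finset.mul_sum, hrow, hinv, hmul, hπ1]
  ring

/-- Doeblin's bound: under the minorization `P^N ≥ δΠ`, the matrix `P^N - δΠ` is nonnegative
with row sums `1 - δ`, so each block of `N` steps contracts `P^s - Π` by `1 - δ`. -/
theorem abs_pow_apply_sub_le_of_minorization {P : Matrix n n ℝ} (hP : P ∈ rowStochastic ℝ n)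
    {π : n → ℝ} (hπ0 : ∀ v, 0 ≤ π v) (hπ1 : ∑ v, π v = 1) (hπ : π ᵥ* P = π)
    {N : ℕ} (hN : 0 < N) {δ : ℝ} (hδ : ∀ u x, δ * π x ≤ (P ^ N) u x) (s : ℕ) (u v : n) :
    |(P ^ s) u v - π v| ≤ (1 - δ) ^ (s / N) := by
  induction s using Nat.strong_induction_on generalizing u with
  | _ s ih =>
    rcases lt_or_ge s N with hs | hs
    · have hπv : π v ≤ 1 := hπ1 ▸ Finset.single_le_sum (fun x _ => hπ0 x) (Finset.mem_univ v)
      have h0 : 0 ≤ (P ^ s) u v := nonneg_of_mem_rowStochastic (pow_mem hP s)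
      have h1 : (P ^ s) u v ≤ 1 := le_one_of_mem_rowStochastic (pow_mem hP s)
      rw [Nat.div_eq_of_lt hs, pow_zero, abs_le]
      constructor <;> linarith [hπ0 v]
    · have hdiv : s / N = (s - N) / N + 1 := Nat.div_eq_sub_div hN hs
      have hrow : ∑ x, ((P ^ N) u x - δ * π x) = 1 - δ := by
        rw [Finset.sum_sub_distrib, ← Finset.mul_sum, hπ1, mul_one,
          sum_row_of_mem_rowStochastic (pow_mem hP N) u]
      rw [pow_apply_sub_eq_sum hP hπ1 hπ δ hs, hdiv, pow_succ']
      calc |∑ x, ((P ^ N) u x - δ * π x) * ((P ^ (s - N)) x v - π v)|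
          ≤ ∑ x, ((P ^ N) u x - δ * π x) * (1 - δ) ^ ((s - N) / N) := by
            refine (Finset.abs_sum_le_sum_abs _ _).trans (Finset.sum_le_sum fun x _ => ?_)
            rw [abs_mul, abs_of_nonneg (sub_nonneg.2 (hδ u x))]
            exact mul_le_mul_of_nonneg_left (ih _ (by omega) x) (sub_nonneg.2 (hδ u x))
        _ = (1 - δ) * (1 - δ) ^ ((s - N) / N) := by rw [← Finset.sum_mul, hrow]

theorem exists_abs_pow_apply_sub_le_geometric
    {P : Matrix n n ℝ} (hP : P ∈ rowStochastic ℝ n) {π : n → ℝ} (hπ0 : ∀ v, 0 ≤ π v)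
    (hπ1 : ∑ v, π v = 1) (hπ : π ᵥ* P = π) (hprim : ∃ N, ∀ m ≥ N, ∀ u v, 0 < (P ^ m) u v) :
    ∃ c > 0, ∃ ρ ∈ Ioo (0 : ℝ) 1, ∀ s u v, |(P ^ s) u v - π v| ≤ c * ρ ^ s := by
  obtain ⟨N, hN⟩ := hprim
  have hpos : ∀ u x, 0 < (P ^ (N + 1)) u x := hN (N + 1) N.le_succ
  obtain ⟨δ, ⟨hδ1, hδP⟩, hδ0⟩ : ∃ δ : ℝ, (δ < 1 ∧ ∀ u x, δ < (P ^ (N + 1)) u x) ∧ 0 < δ :=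
    (((eventually_lt_nhds one_pos).and (eventually_all.2 fun u => eventually_all.2 fun x =>
      eventually_lt_nhds (hpos u x))).filter_mono nhdsWithin_le_nhds |>.and
      self_mem_nhdsWithin).exists (f := 𝓝[>] 0)
  have hminor : ∀ u x, δ * π x ≤ (P ^ (N + 1)) u x := fun u x => by
    have hπx : π x ≤ 1 := hπ1 ▸ Finset.single_le_sum (fun y _ => hπ0 y) (Finset.mem_univ x)
    nlinarith [hδP u x]
  obtain ⟨c, hc, ρ, hρ, hgeom⟩ :=
    exists_pow_div_le_geometric (sub_pos.2 hδ1) (by linarith) N.succ_pos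
  exact ⟨c, hc, ρ, hρ, fun s u v =>
    (abs_pow_apply_sub_le_of_minorization hP hπ0 hπ1 hπ N.succ_pos hminor s u v).trans (hgeom s)⟩

end Matrix

theorem abs_sum_sum_mul_sub_le {ι : Type*} [Fintype ι] {b g π : ι → ℝ} {q : ι → ι → ℝ} {ε : ℝ}
    (hb : ∀ u, 0 ≤ b u) (hg0 : ∀ v, 0 ≤ g v) (hg1 : ∀ v, g v ≤ 1)
    (hq : ∀ u v, |q u v - π v| ≤ ε) :
    |∑ v, (∑ u, b u * q u v) * g v - (∑ u, b u) * ∑ v, π v * g v| ≤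
      Fintype.card ι * ε * ∑ u, b u := by
  have hsplit : ∑ v, (∑ u, b u * q u v) * g v - (∑ u, b u) * ∑ v, π v * g v =
      ∑ v, ∑ u, b u * (q u v - π v) * g v := by
    simp only [mul_sub, sub_mul, Finset.sum_sub_distrib, Finset.sum_mul, Finset.mul_sum,
      mul_assoc]
  have hterm : ∀ u v, |b u * (q u v - π v) * g v| ≤ b u * ε := fun u v => by
    rw [abs_mul, abs_mul, abs_of_nonneg (hb u), abs_of_nonneg (hg0 v)]
    have hε : 0 ≤ ε := (abs_nonneg _).trans (hq u v)
    calc b u * |q u v - π v| * g v ≤ b u * ε * 1 :=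
          mul_le_mul (mul_le_mul_of_nonneg_left (hq u v) (hb u)) (hg1 v) (hg0 v)
            (mul_nonneg (hb u) hε)
      _ = b u * ε := mul_one _
  calc |∑ v, (∑ u, b u * q u v) * g v - (∑ u, b u) * ∑ v, π v * g v|
      ≤ ∑ v, ∑ u, |b u * (q u v - π v) * g v| := by
        rw [hsplit]
        exact (Finset.abs_sum_le_sum_abs _ _).trans
          (Finset.sum_le_sum fun v _ => Finset.abs_sum_le_sum_abs _ _)
    _ ≤ ∑ _v : ι, ∑ u, b u * ε := Finset.sum_le_sum fun v _ => Finset.sum_le_sum fun u _ =>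
        hterm u v
    _ = Fintype.card ι * ε * ∑ u, b u := by
        rw [Finset.sum_const, Finset.card_univ, nsmul_eq_mul, ← Finset.sum_mul]
        ring

theorem Set.pi_finset_eq_pi_Iio {α : Type*} (s : Finset ℕ) (t : ℕ → Set α) :
    (s : Set ℕ).pi t = (Iio (s.sup id + 1)).pi fun i => if i ∈ s then t i else univ := by
  ext g
  simp only [mem_pi, Finset.mem_coe, mem_Iio]
  refine ⟨fun h i _ => ?_, fun h i hi => ?_⟩
  · split_ifs with hi
    exacts [h i hi, mem_univ _]
  · simpa [hi] using h i (Nat.lt_succ_of_le (Finset.le_sup (f := id) hi))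

theorem ProbabilityTheory.cond_real_apply {Ω : Type*} [MeasurableSpace Ω] {μ : Measure Ω}
    {s : Set Ω} (hs : MeasurableSet s) (t : Set Ω) :
    μ[|s].real t = (μ.real s)⁻¹ * μ.real (s ∩ t) := by
  rw [measureReal_def, cond_apply hs, ENNReal.toReal_mul, ENNReal.toReal_inv]
  rfl

theorem measureReal_eq_sum_inter_fiber {Ω α : Type*} [MeasurableSpace Ω] [Fintype α]
    (μ : Measure Ω) [IsFiniteMeasure μ] {X : Ω → α} (hX : ∀ a, MeasurableSet {ω | X ω = a})
    {B : Set Ω} (hB : MeasurableSet B) :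
    μ.real B = ∑ a, μ.real (B ∩ {ω | X ω = a}) := by
  rw [← measureReal_iUnion_fintype (fun a b hab => Set.disjoint_left.2
      fun ω ha hb => hab (ha.2.symm.trans hb.2)) (fun a => hB.inter (hX a)),
    ← inter_iUnion, iUnion_eq_univ_iff.2 fun ω => ⟨X ω, rfl⟩, inter_univ]

theorem mul_measureReal_inter_preimage_eq_of_isPiSystem {Ω β : Type*} [MeasurableSpace Ω]
    [mβ : MeasurableSpace β] {μ : Measure Ω} [IsFiniteMeasure μ] {S : Set (Set β)}
    (hgen : mβ = MeasurableSpace.generateFrom S) (hS : IsPiSystem S)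
    (hspan : IsCountablySpanning S) {X Y : Ω → β} (hX : Measurable X) (hY : Measurable Y)
    {A B : Set Ω} {a b : ℝ} (ha : 0 ≤ a) (hb : 0 ≤ b)
    (h : ∀ C ∈ S, a * μ.real (A ∩ X ⁻¹' C) = b * μ.real (B ∩ Y ⁻¹' C))
    {C : Set β} (hC : MeasurableSet C) :
    a * μ.real (A ∩ X ⁻¹' C) = b * μ.real (B ∩ Y ⁻¹' C) := by
  have hν : ∀ {c : ℝ} (A : Set Ω) {X : Ω → β}, 0 ≤ c → Measurable X → ∀ {C}, MeasurableSet C →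
      (ENNReal.ofReal c • (μ.restrict A).map X) C = ENNReal.ofReal (c * μ.real (A ∩ X ⁻¹' C)) := by
    intro c A X hc hX C hC
    rw [Measure.smul_apply, Measure.map_apply hX hC, Measure.restrict_apply (hX hC), smul_eq_mul,
      ENNReal.ofReal_mul hc, inter_comm, ofReal_measureReal]
  obtain ⟨D, hDS, hDU⟩ := hspan
  have hmeas : ∀ C ∈ S, MeasurableSet C := fun C hC => hgen ▸ .basic C hC
  have heq := Measure.ext_of_generateFrom_of_iUnion (μ := ENNReal.ofReal a • (μ.restrict A).map X)
    (ν := ENNReal.ofReal b • (μ.restrict B).map Y) S D hgen hS hDU hDS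
    (fun i => by rw [hν A ha hX (hmeas _ (hDS i))]; exact ENNReal.ofReal_ne_top)
    (fun C hCS => by rw [hν A ha hX (hmeas C hCS), hν B hb hY (hmeas C hCS), h C hCS])
  have := congrArg ENNReal.toReal (congrFun (congrArg DFunLike.coe heq) C)
  rwa [hν A ha hX hC, hν B hb hY hC, ENNReal.toReal_ofReal (by positivity),
    ENNReal.toReal_ofReal (by positivity)] at this

namespace MarkovRenewal

variable {Ω 𝒱 : Type} [MeasurableSpace Ω] [Fintype 𝒱] [DecidableEq 𝒱] [MeasurableSpace 𝒱]
  [MeasurableSingletonClass 𝒱] {P : Measure Ω} (M : MarkovRenewal Ω P 𝒱)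

open Matrix

abbrev history (m : ℕ) : MeasurableSpace Ω :=
  MeasurableSpace.comap (fun ω (i : Fin (m + 1)) => (M.V i ω, M.S i ω)) inferInstance

def sojourn (m : ℕ) (ω : Ω) : ℝ := M.S (m + 1) ω - M.S m ω

/-- `M.future m ω i = (V̂_{m+i}, S_{m+i+1} - S_{m+i})`, so that `η_{m+i+1} = f(M.future m ω i)`. -/
def future (m : ℕ) (ω : Ω) (i : ℕ) : 𝒱 × ℝ := (M.V (m + i) ω, M.sojourn (m + i) ω)

theorem measurable_history_pair {i m : ℕ} (h : i ≤ m) :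
    Measurable[M.history m] fun ω => (M.V i ω, M.S i ω) :=
  fun _ hs => ⟨_, measurable_pi_apply (⟨i, by omega⟩ : Fin (m + 1)) hs, rfl⟩

theorem measurable_history_V {i m : ℕ} (h : i ≤ m) : Measurable[M.history m] (M.V i) :=
  measurable_fst.comp (M.measurable_history_pair h)

theorem measurable_history_S {i m : ℕ} (h : i ≤ m) : Measurable[M.history m] (M.S i) :=
  measurable_snd.comp (M.measurable_history_pair h)

theorem measurable_history_sojourn {m j : ℕ} (h : j + 1 ≤ m) :
    Measurable[M.history m] (M.sojourn j) :=
  (M.measurable_history_S h).sub (M.measurable_history_S (by omega))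

theorem measurableSet_history_V_eq {i m : ℕ} (h : i ≤ m) (v : 𝒱) :
    MeasurableSet[M.history m] {ω | M.V i ω = v} :=
  M.measurable_history_V h (measurableSet_singleton v)

theorem history_le (m : ℕ) : M.history m ≤ ‹MeasurableSpace Ω› :=
  Measurable.comap_le (measurable_pi_lambda _ fun i => (M.measV i).prodMk (M.measS i))

theorem history_mono {m m' : ℕ} (h : m ≤ m') : M.history m ≤ M.history m' := by
  rintro _ ⟨s, hs, rfl⟩
  exact ⟨(fun g (i : Fin (m + 1)) => g (Fin.castLE (by omega) i)) ⁻¹' s,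
    measurable_pi_lambda _ (fun i => measurable_pi_apply _) hs, rfl⟩

theorem measurableSet_V_eq (i : ℕ) (v : 𝒱) : MeasurableSet {ω | M.V i ω = v} :=
  M.history_le i _ (M.measurableSet_history_V_eq le_rfl v)

theorem measurable_sojourn (m : ℕ) : Measurable (M.sojourn m) := (M.measS _).sub (M.measS _)

theorem measurable_future (m : ℕ) : Measurable (M.future m) :=
  measurable_pi_lambda _ fun _ => (M.measV _).prodMk (M.measurable_sojourn _)

theorem measurable_history_comp_V_sojourn {β : Type*} [MeasurableSpace β] {g : 𝒱 × ℝ → β}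
    (hg : Measurable g) (k : ℕ) :
    Measurable[M.history k] fun ω (j : Fin k) => g (M.V j ω, M.sojourn j ω) :=
  @measurable_pi_lambda _ _ _ (M.history k) _ _ fun _ => hg.comp
    ((M.measurable_history_V (by omega)).prodMk (M.measurable_history_sojourn (by omega)))

theorem future_succ (m i : ℕ) (ω : Ω) : M.future m ω (i + 1) = M.future (m + 1) ω i := by
  rw [future, future, Nat.add_right_comm m 1 i]
  rfl

theorem inter_future_preimage_pi_Iio_succ {j : ℕ} {w w' : 𝒱} {B : Set Ω}
    (hBw : B ⊆ {ω | M.V j ω = w}) (r : ℕ) (t : ℕ → Set (𝒱 × ℝ)) :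
    B ∩ M.future j ⁻¹' (Iio (r + 1)).pi t ∩ {ω | M.V (j + 1) ω = w'} =
      B ∩ {ω | M.V (j + 1) ω = w'} ∩ M.sojourn j ⁻¹' {x | (w, x) ∈ t 0} ∩
        M.future (j + 1) ⁻¹' (Iio r).pi fun i => t (i + 1) := by
  ext ω
  simp only [mem_inter_iff, mem_preimage, Set.mem_pi, mem_Iio, Nat.forall_lt_succ_left,
    M.future_succ, mem_ofPred_eq]
  constructor
  · rintro ⟨⟨hB, h0, hr⟩, hV⟩
    exact ⟨⟨⟨hB, hV⟩, hBw hB ▸ h0⟩, hr⟩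
  · rintro ⟨⟨⟨hB, hV⟩, h0⟩, hr⟩
    refine ⟨⟨hB, ?_, hr⟩, hV⟩
    show (M.V j ω, M.sojourn j ω) ∈ t 0
    rwa [show M.V j ω = w from hBw hB]

variable [IsFiniteMeasure P] {p : 𝒱 → 𝒱 → ℝ}

theorem measureReal_eq_sum_inter_V (m : ℕ) {B : Set Ω} (hB : MeasurableSet B) :
    P.real B = ∑ v, P.real (B ∩ {ω | M.V m ω = v}) :=
  measureReal_eq_sum_inter_fiber P (M.measurableSet_V_eq m) hB

theorem measureReal_inter_V_succ (hp : M.IsTransitionMatrix p) {m : ℕ} {w w' : 𝒱} {A : Set Ω}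
    (hA : MeasurableSet[M.history m] A) (hAw : A ⊆ {ω | M.V m ω = w}) :
    P.real (A ∩ {ω | M.V (m + 1) ω = w'}) = P.real A * p w w' := by
  set E : ℕ → Set Ω := fun t => A ∩ {ω | M.V (m + 1) ω = w' ∧ M.S (m + 1) ω - M.S m ω ≤ t}
  have hE : ⋃ t, E t = A ∩ {ω | M.V (m + 1) ω = w'} := by
    ext ω
    simpa [E, and_assoc] using fun _ _ => exists_nat_ge (M.S (m + 1) ω - M.S m ω)
  have hlim : Tendsto (fun t : ℕ => P.real (E t)) atTop
      (𝓝 (P.real (A ∩ {ω | M.V (m + 1) ω = w'}))) := by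
    rw [← hE]
    refine (ENNReal.tendsto_toReal (measure_ne_top _ _)).comp (tendsto_measure_iUnion_atTop ?_)
    intro s t hst ω ⟨hωA, hωV, hωS⟩
    exact ⟨hωA, hωV, hωS.trans (Nat.cast_le.2 hst)⟩
  refine tendsto_nhds_unique hlim ?_
  rw [show (fun t : ℕ => P.real (E t)) = fun t : ℕ => P.real A * M.Q w w' t from
    funext fun t => M.markov m w w' t A hA hAw]
  exact ((hp w w').comp tendsto_natCast_atTop_atTop).const_mul _

theorem measureReal_inter_V_add (hp : M.IsTransitionMatrix p) (s : ℕ) {m : ℕ} {w : 𝒱}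
    {A : Set Ω} (hA : MeasurableSet[M.history m] A) (hAw : A ⊆ {ω | M.V m ω = w}) (v : 𝒱) :
    P.real (A ∩ {ω | M.V (m + s) ω = v}) = P.real A * (Matrix.of p ^ s) w v := by
  induction s generalizing v with
  | zero =>
    rcases eq_or_ne w v with rfl | hwv
    · simp [inter_eq_left.2 hAw]
    · have hempty : A ∩ {ω | M.V m ω = v} = ∅ :=
        eq_empty_of_forall_notMem fun ω hω => hwv ((hAw hω.1).symm.trans hω.2)
      simp [hempty, Matrix.one_apply_ne hwv]
  | succ s ih =>
    have hAs : ∀ x, MeasurableSet[M.history (m + s)] (A ∩ {ω | M.V (m + s) ω = x}) := fun x =>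
      (M.history_mono (by omega) _ hA).inter (M.measurableSet_history_V_eq le_rfl x)
    calc P.real (A ∩ {ω | M.V (m + (s + 1)) ω = v})
        = ∑ x, P.real (A ∩ {ω | M.V (m + s) ω = x} ∩ {ω | M.V (m + s + 1) ω = v}) := by
          rw [M.measureReal_eq_sum_inter_V (m + s)
            ((M.history_le m _ hA).inter (M.measurableSet_V_eq _ v))]
          simp only [inter_right_comm _ {ω | M.V (m + s) ω = _}, add_assoc]
      _ = ∑ x, P.real A * ((Matrix.of p ^ s) w x * p x v) := by
          simp only [M.measureReal_inter_V_succ hp (hAs _) inter_subset_right, ih, mul_assoc]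
      _ = P.real A * (Matrix.of p ^ (s + 1)) w v := by
          rw [← Finset.mul_sum, pow_succ, Matrix.mul_apply]
          rfl

theorem measureReal_V_eq (hp : M.IsTransitionMatrix p) {π : 𝒱 → ℝ}
    (hV0 : ∀ v, P.real {ω | M.V 0 ω = v} = π v) (hπ : π ᵥ* Matrix.of p = π) (m : ℕ) (v : 𝒱) :
    P.real {ω | M.V m ω = v} = π v := by
  rw [M.measureReal_eq_sum_inter_V 0 (M.measurableSet_V_eq m v)]
  calc ∑ w, P.real ({ω | M.V m ω = v} ∩ {ω | M.V 0 ω = w})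
      = ∑ w, π w * (Matrix.of p ^ m) w v := by
        refine Finset.sum_congr rfl fun w _ => ?_
        rw [inter_comm, ← hV0, ← M.measureReal_inter_V_add hp m
          (M.measurableSet_history_V_eq le_rfl w) subset_rfl, zero_add]
    _ = π v := congrFun (Matrix.vecMul_pow_eq_self hπ m) v

variable {M} in
theorem IsTransitionMatrix.mem_rowStochastic (hp : M.IsTransitionMatrix p)
    (h0 : ∀ w, 0 < P.real {ω | M.V 0 ω = w}) : Matrix.of p ∈ Matrix.rowStochastic ℝ 𝒱 := by
  have hstep : ∀ w w', P.real ({ω | M.V 0 ω = w} ∩ {ω | M.V 1 ω = w'})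
      = P.real {ω | M.V 0 ω = w} * p w w' := fun w w' =>
    M.measureReal_inter_V_succ hp (M.measurableSet_history_V_eq le_rfl w) subset_rfl
  refine Matrix.mem_rowStochastic_iff_sum.2 ⟨fun w w' => ?_, fun w => ?_⟩
  · exact nonneg_of_mul_nonneg_right (hstep w w' ▸ measureReal_nonneg) (h0 w)
  · refine mul_left_cancel₀ (h0 w).ne' ?_
    rw [mul_one, Finset.mul_sum]
    conv_rhs => rw [M.measureReal_eq_sum_inter_V 1 (M.measurableSet_V_eq 0 w)]
    exact Finset.sum_congr rfl fun w' _ => (hstep w w').symm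

theorem measureReal_mul_inter_sojourn {m : ℕ} {w w' : 𝒱} {A : Set Ω}
    (hA : MeasurableSet[M.history m] A) (hAw : A ⊆ {ω | M.V m ω = w}) {T : Set ℝ}
    (hT : MeasurableSet T) :
    P.real {ω | M.V 0 ω = w} * P.real (A ∩ {ω | M.V (m + 1) ω = w'} ∩ M.sojourn m ⁻¹' T) =
      P.real A * P.real ({ω | M.V 0 ω = w} ∩ {ω | M.V 1 ω = w'} ∩ M.sojourn 0 ⁻¹' T) := by
  refine mul_measureReal_inter_preimage_eq_of_isPiSystem
    (BorelSpace.measurable_eq.trans (borel_eq_generateFrom_Iic ℝ)) isPiSystem_Iic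
    ⟨fun n : ℕ => Iic (n : ℝ), fun n => mem_range_self _,
      iUnion_eq_univ_iff.2 fun x => exists_nat_ge x⟩
    (M.measurable_sojourn m) (M.measurable_sojourn 0) measureReal_nonneg measureReal_nonneg
    ?_ hT
  rintro _ ⟨t, rfl⟩
  have hA' : P.real (A ∩ {ω | M.V (m + 1) ω = w'} ∩ M.sojourn m ⁻¹' Iic t) =
      P.real A * M.Q w w' t := (inter_assoc _ _ _).symm ▸ M.markov m w w' t A hA hAw
  have h0 : P.real ({ω | M.V 0 ω = w} ∩ {ω | M.V 1 ω = w'} ∩ M.sojourn 0 ⁻¹' Iic t) =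
      P.real {ω | M.V 0 ω = w} * M.Q w w' t := (inter_assoc _ _ _).symm ▸
    M.markov 0 w w' t _ (M.measurableSet_history_V_eq le_rfl w) subset_rfl
  rw [hA', h0]
  ring

theorem measureReal_mul_inter_future_pi_Iio (h0 : ∀ w, P.real {ω | M.V 0 ω = w} ≠ 0) (r : ℕ)
    {t : ℕ → Set (𝒱 × ℝ)} (ht : ∀ i, MeasurableSet (t i)) {m : ℕ} {w : 𝒱} {A : Set Ω}
    (hA : MeasurableSet[M.history m] A) (hAw : A ⊆ {ω | M.V m ω = w}) :
    P.real {ω | M.V 0 ω = w} * P.real (A ∩ M.future m ⁻¹' (Iio r).pi t) =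
      P.real A * P.real ({ω | M.V 0 ω = w} ∩ M.future 0 ⁻¹' (Iio r).pi t) := by
  induction r generalizing t m w A with
  | zero => simp [mul_comm]
  | succ r ih =>
    set T := {x | (w, x) ∈ t 0}
    have hT : MeasurableSet T := measurable_prodMk_left (ht 0)
    set box := (Iio r).pi fun i => t (i + 1)
    -- Split according to the next state `w'`: the first holding time is handled by the
    -- one-step property, the rest by the induction hypothesis at times `m + 1` and `1`.
    have hnext : ∀ w', P.real {ω | M.V 0 ω = w} *
        P.real (A ∩ {ω | M.V (m + 1) ω = w'} ∩ M.sojourn m ⁻¹' T ∩ M.future (m + 1) ⁻¹' box) =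
        P.real A * P.real ({ω | M.V 0 ω = w} ∩ {ω | M.V 1 ω = w'} ∩ M.sojourn 0 ⁻¹' T ∩
          M.future 1 ⁻¹' box) := by
      intro w'
      have ihA := ih (fun i => ht (i + 1)) (m := m + 1) (w := w')
        (((M.history_mono m.le_succ _ hA).inter (M.measurableSet_history_V_eq le_rfl w')).inter
          (M.measurable_history_sojourn le_rfl hT)) fun _ hω => hω.1.2
      have ihB := ih (fun i => ht (i + 1)) (m := 1) (w := w')
        (((M.history_mono (Nat.zero_le 1) _ (M.measurableSet_history_V_eq le_rfl w)).inter
          (M.measurableSet_history_V_eq le_rfl w')).inter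
          (M.measurable_history_sojourn le_rfl hT)) fun _ hω => hω.1.2
      have hstep := M.measureReal_mul_inter_sojourn hA hAw hT (w' := w')
      refine mul_left_cancel₀ (h0 w') ?_
      linear_combination P.real {ω | M.V 0 ω = w} * ihA + ihB.symm * P.real A
        + hstep * P.real ({ω | M.V 0 ω = w'} ∩ M.future 0 ⁻¹' box)
    rw [M.measureReal_eq_sum_inter_V (m + 1) ((M.history_le m _ hA).inter
        (M.measurable_future m (MeasurableSet.pi (to_countable _) fun i _ => ht i))),
      M.measureReal_eq_sum_inter_V 1 ((M.measurableSet_V_eq 0 w).inter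
        (M.measurable_future 0 (MeasurableSet.pi (to_countable _) fun i _ => ht i))),
      Finset.mul_sum, Finset.mul_sum]
    refine Finset.sum_congr rfl fun w' _ => ?_
    rw [M.inter_future_preimage_pi_Iio_succ hAw, M.inter_future_preimage_pi_Iio_succ subset_rfl]
    exact hnext w'

/-- The Markov renewal property for the whole future: given `V̂_m = w`, the future after time `m`
is independent of the past and distributed as the future after time `0` given `V̂_0 = w`. -/
theorem measureReal_mul_inter_future (h0 : ∀ w, P.real {ω | M.V 0 ω = w} ≠ 0)
    {C : Set (ℕ → 𝒱 × ℝ)} (hC : MeasurableSet C) {m : ℕ} {w : 𝒱} {A : Set Ω}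
    (hA : MeasurableSet[M.history m] A) (hAw : A ⊆ {ω | M.V m ω = w}) :
    P.real {ω | M.V 0 ω = w} * P.real (A ∩ M.future m ⁻¹' C) =
      P.real A * P.real ({ω | M.V 0 ω = w} ∩ M.future 0 ⁻¹' C) := by
  refine mul_measureReal_inter_preimage_eq_of_isPiSystem generateFrom_squareCylinders.symm
    (isPiSystem_squareCylinders (fun _ => MeasurableSpace.isPiSystem_measurableSet)
      fun _ => MeasurableSet.univ)
    ⟨fun _ => univ, fun _ => ⟨∅, fun _ => univ, by simp, by simp⟩, iUnion_const _⟩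
    (M.measurable_future m) (M.measurable_future 0) measureReal_nonneg measureReal_nonneg ?_ hC
  rintro _ ⟨s, t, ht, rfl⟩
  rw [Set.pi_finset_eq_pi_Iio]
  refine M.measureReal_mul_inter_future_pi_Iio h0 _ (fun i => ?_) hA hAw
  split_ifs
  exacts [ht i (mem_univ i), MeasurableSet.univ]

theorem measureReal_inter_future_eq_mul_cond (h0 : ∀ w, P.real {ω | M.V 0 ω = w} ≠ 0)
    {C : Set (ℕ → 𝒱 × ℝ)} (hC : MeasurableSet C) {m : ℕ} {w : 𝒱} {A : Set Ω}
    (hA : MeasurableSet[M.history m] A) (hAw : A ⊆ {ω | M.V m ω = w}) :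
    P.real (A ∩ M.future m ⁻¹' C) =
      P.real A * P[|{ω | M.V 0 ω = w}].real (M.future 0 ⁻¹' C) := by
  rw [cond_real_apply (M.measurableSet_V_eq 0 w), mul_left_comm,
    ← M.measureReal_mul_inter_future h0 hC hA hAw, inv_mul_cancel_left₀ (h0 w)]

theorem measureReal_inter_future_eq_sum (h0 : ∀ w, P.real {ω | M.V 0 ω = w} ≠ 0)
    {C : Set (ℕ → 𝒱 × ℝ)} (hC : MeasurableSet C) {m : ℕ} {A : Set Ω}
    (hA : MeasurableSet[M.history m] A) :
    P.real (A ∩ M.future m ⁻¹' C) =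
      ∑ v, P.real (A ∩ {ω | M.V m ω = v}) * P[|{ω | M.V 0 ω = v}].real (M.future 0 ⁻¹' C) := by
  rw [M.measureReal_eq_sum_inter_V m ((M.history_le m _ hA).inter (M.measurable_future m hC))]
  refine Finset.sum_congr rfl fun v _ => ?_
  rw [inter_right_comm]
  exact M.measureReal_inter_future_eq_mul_cond h0 hC
    (hA.inter (M.measurableSet_history_V_eq le_rfl v)) inter_subset_right

theorem abs_measureReal_inter_future_div_sub_le (hp : M.IsTransitionMatrix p)
    {π : 𝒱 → ℝ} (hV0 : ∀ v, P.real {ω | M.V 0 ω = v} = π v) (hπpos : ∀ v, 0 < π v)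
    (hπ : π ᵥ* Matrix.of p = π) {k s : ℕ} {A : Set Ω} (hA : MeasurableSet[M.history k] A)
    (hPA : 0 < P.real A) {C : Set (ℕ → 𝒱 × ℝ)} (hC : MeasurableSet C) {ε : ℝ}
    (hε : ∀ u v, |(Matrix.of p ^ s) u v - π v| ≤ ε) :
    |P.real (A ∩ M.future (k + s) ⁻¹' C) / P.real A - P.real (M.future (k + s) ⁻¹' C)| ≤
      Fintype.card 𝒱 * ε := by
  have h0 : ∀ w, P.real {ω | M.V 0 ω = w} ≠ 0 := fun w => (hV0 w).symm ▸ (hπpos w).ne'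
  have hAmeas : MeasurableSet A := M.history_le k _ hA
  have hAC : P.real (A ∩ M.future (k + s) ⁻¹' C) = ∑ v,
      (∑ u, P.real (A ∩ {ω | M.V k ω = u}) * (Matrix.of p ^ s) u v) *
        P[|{ω | M.V 0 ω = v}].real (M.future 0 ⁻¹' C) := by
    rw [M.measureReal_inter_future_eq_sum h0 hC (M.history_mono (by omega) _ hA)]
    refine Finset.sum_congr rfl fun v _ => congrArg (· * _) ?_
    rw [M.measureReal_eq_sum_inter_V k (hAmeas.inter (M.measurableSet_V_eq _ v))]
    refine Finset.sum_congr rfl fun u _ => ?_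
    rw [inter_right_comm]
    exact M.measureReal_inter_V_add hp s (hA.inter (M.measurableSet_history_V_eq le_rfl u))
      inter_subset_right v
  have hC' : P.real (M.future (k + s) ⁻¹' C) =
      ∑ v, π v * P[|{ω | M.V 0 ω = v}].real (M.future 0 ⁻¹' C) := by
    simpa [M.measureReal_V_eq hp hV0 hπ] using
      M.measureReal_inter_future_eq_sum h0 hC (m := k + s) MeasurableSet.univ
  rw [div_sub' hPA.ne', abs_div, abs_of_pos hPA, div_le_iff₀ hPA, hAC, hC',
    M.measureReal_eq_sum_inter_V k hAmeas]
  exact abs_sum_sum_mul_sub_le (fun _ => measureReal_nonneg) (fun _ => measureReal_nonneg)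
    (fun _ => measureReal_le_one) hε

end MarkovRenewal

/-- the stationary sequence `η_k = f(V̂_{k−1}, S_k − S_{k−1})` obtained
from a Markov renewal process with primitive embedded chain and stationary start is
φ-mixing with geometric coefficients `φ_n = K ρ^{n−1}`: for all events `A` in
`σ(η_1,…,η_k)` with `P(A) > 0` and `B` in `σ(η_{k+n}, η_{k+n+1},…)`,
`|P(B|A) − P(B)| ≤ K ρ^{n−1}`. -/
theorem stmt8 {Ω 𝒱 : Type} [MeasurableSpace Ω] [Fintype 𝒱] [DecidableEq 𝒱]
    [MeasurableSpace 𝒱] [MeasurableSingletonClass 𝒱]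
    (P : Measure Ω) [IsProbabilityMeasure P] (M : MarkovRenewal Ω P 𝒱)
    (p : 𝒱 → 𝒱 → ℝ) (hp : M.IsTransitionMatrix p) (hprim : Primitive p)
    (π : 𝒱 → ℝ) (hπ : IsInvariantDist p π)
    (hV0 : ∀ v, (P {ω | M.V 0 ω = v}).toReal = π v)
    (f : 𝒱 → ℝ → ℝ) (hf : Measurable (Function.uncurry f)) :
    ∃ K > (0:ℝ), ∃ ρ ∈ Set.Ico (0:ℝ) 1, ∀ (k n : ℕ), 1 ≤ k → 1 ≤ n →
      ∀ A B : Set Ω,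
        MeasurableSet[MeasurableSpace.comap
          (fun ω => fun j : Fin k =>
            f (M.V (j : ℕ) ω) (M.S ((j : ℕ) + 1) ω - M.S (j : ℕ) ω)) inferInstance] A →
        MeasurableSet[MeasurableSpace.comap
          (fun ω => fun j : ℕ =>
            f (M.V (k + n - 1 + j) ω) (M.S (k + n + j) ω - M.S (k + n - 1 + j) ω))
          inferInstance] B →
        P A ≠ 0 →
        |(P (A ∩ B)).toReal / (P A).toReal - (P B).toReal| ≤ K * ρ ^ (n - 1) := by
  have hV0' : ∀ v, P.real {ω | M.V 0 ω = v} = π v := hV0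
  have hπP : Matrix.vecMul π (Matrix.of p) = π := funext hπ.2.2
  obtain ⟨c, hc, ρ, hρ, hgeom⟩ := Matrix.exists_abs_pow_apply_sub_le_geometric
    (hp.mem_rowStochastic fun w => hV0' w ▸ hπ.1 w) (fun v => (hπ.1 v).le) hπ.2.1 hπP hprim
  have : Nonempty 𝒱 := Finset.univ_nonempty_iff.1
    (Finset.nonempty_of_sum_ne_zero (hπ.2.1 ▸ one_ne_zero))
  refine ⟨Fintype.card 𝒱 * c, by positivity, ρ, Ioo_subset_Ico_self hρ,
    fun k n _ hn A B hA hB hPA => ?_⟩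
  obtain ⟨D, hD, rfl⟩ := hB
  have hfuture : (fun ω j => f (M.V (k + n - 1 + j) ω) (M.S (k + n + j) ω - M.S (k + n - 1 + j) ω))
      = (fun g j => Function.uncurry f (g j)) ∘ M.future (k + (n - 1)) := by
    funext ω j
    simp only [Function.comp_apply, MarkovRenewal.future, MarkovRenewal.sojourn,
      Function.uncurry_apply_pair, show k + (n - 1) + j = k + n - 1 + j by omega,
      show k + n - 1 + j + 1 = k + n + j by omega]
  rw [hfuture, preimage_comp, mul_assoc]
  exact M.abs_measureReal_inter_future_div_sub_le hp hV0' hπ.1 hπP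
    ((M.measurable_history_comp_V_sojourn hf k).comap_le _ hA)
    (ENNReal.toReal_pos hPA (measure_ne_top _ _))
    (measurable_pi_lambda _ (fun j => hf.comp (measurable_pi_apply j)) hD) (hgeom (n - 1))
end
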